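/- Under the hypotheses of the previous statement, if lim_{ε→0⁺} ∫_ε^{ρ₀} t e^{−2G(t)} dt = ∞, then Σ_{n=1}^∞ 4^{−n} e^{−2G(2^{−n}ρ₀)} = ∞. -/

import Mathlib

/-!
The lower bound `G' ≥ 1/(2t)` makes `t ↦ t e^{-2G(t)}` nonincreasing near `0`. Hence on each
dyadic interval `[2^{-(n+1)}ρ₀, 2^{-n}ρ₀]` the integral of `t e^{-2G(t)}` is at most the interval's
length times the value at its left end, which is `ρ₀² 4^{-(n+1)} e^{-2G(2^{-(n+1)}ρ₀)}`. Summing,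
`∫_{2^{-N}ρ₀}^{ρ₀}` is bounded by a partial sum of `ρ₀²` times the series, so the series diverges
along with the integral.
-/

open Real Set MeasureTheory Filter

open scoped Topology

theorem antitoneOn_mul_exp_neg_two_mul {G g : ℝ → ℝ} {b : ℝ}
    (hG : ∀ t ∈ Ioo 0 b, HasDerivAt G (g t) t) (hg : ∀ t ∈ Ioo 0 b, 1 / (2 * t) ≤ g t) :
    AntitoneOn (fun t => t * exp (-2 * G t)) (Ioo 0 b) := by
  have hderiv : ∀ t ∈ Ioo 0 b, HasDerivAt (fun t => t * exp (-2 * G t))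
      (exp (-2 * G t) * (1 - 2 * t * g t)) t := fun t ht =>
    ((hasDerivAt_id' t).mul ((hG t ht).const_mul (-2)).exp).congr_deriv (by ring)
  refine antitoneOn_of_hasDerivWithinAt_nonpos
    (f' := fun t => exp (-2 * G t) * (1 - 2 * t * g t)) (convex_Ioo 0 b)
    (fun t ht => (hderiv t ht).continuousAt.continuousWithinAt) (fun t ht => ?_) (fun t ht => ?_)
  · rw [interior_Ioo] at ht
    exact (hderiv t ht).hasDerivWithinAt
  · rw [interior_Ioo] at ht
    have h1 : 1 ≤ 2 * t * g t := by
      have := hg t ht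
      rw [div_le_iff₀ (by linarith [ht.1])] at this
      linarith
    exact mul_nonpos_of_nonneg_of_nonpos (exp_pos _).le (by linarith)

theorem AntitoneOn.intervalIntegral_le_mul {φ : ℝ → ℝ} {s t : ℝ} (hφ : AntitoneOn φ (Icc s t))
    (hst : s ≤ t) : ∫ u in s..t, φ u ≤ (t - s) * φ s := by
  calc ∫ u in s..t, φ u ≤ ∫ _ in s..t, φ s :=
        intervalIntegral.integral_mono_on hst (uIcc_of_le hst ▸ hφ).intervalIntegrable
          intervalIntegrable_const fun u hu => hφ (left_mem_Icc.2 hst) hu hu.1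
    _ = (t - s) * φ s := by rw [intervalIntegral.integral_const, smul_eq_mul]

theorem AntitoneOn.integral_dyadic_le_sum {φ : ℝ → ℝ} {ρ : ℝ} (hφ : AntitoneOn φ (Ioc 0 ρ))
    (hρ : 0 < ρ) (N : ℕ) :
    ∫ t in (2⁻¹ ^ N * ρ)..ρ, φ t ≤
      ∑ n ∈ Finset.range N, 2⁻¹ ^ (n + 1) * ρ * φ (2⁻¹ ^ (n + 1) * ρ) := by
  have hpos : ∀ n : ℕ, 0 < (2⁻¹ : ℝ) ^ n * ρ := fun n => by positivity
  have hle : ∀ n : ℕ, (2⁻¹ : ℝ) ^ n * ρ ≤ ρ := fun n =>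
    mul_le_of_le_one_left hρ.le (pow_le_one₀ (by norm_num) (by norm_num))
  have hsub : ∀ {s t : ℝ}, 0 < s → t ≤ ρ → Icc s t ⊆ Ioc 0 ρ := fun hs ht u hu =>
    ⟨hs.trans_le hu.1, hu.2.trans ht⟩
  have hint : ∀ {s t : ℝ}, s ≤ t → Icc s t ⊆ Ioc 0 ρ → IntervalIntegrable φ volume s t :=
    fun hst h => (uIcc_of_le hst ▸ hφ.mono h).intervalIntegrable
  induction N with
  | zero => simp
  | succ N ih =>
    have hhalf : (2⁻¹ : ℝ) ^ N * ρ - 2⁻¹ ^ (N + 1) * ρ = 2⁻¹ ^ (N + 1) * ρ := by ring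
    have hstep : (2⁻¹ : ℝ) ^ (N + 1) * ρ ≤ 2⁻¹ ^ N * ρ := by linarith [hpos (N + 1)]
    have hpiece := (hφ.mono (hsub (hpos (N + 1)) (hle N))).intervalIntegral_le_mul hstep
    rw [hhalf] at hpiece
    rw [Finset.sum_range_succ, ← intervalIntegral.integral_add_adjacent_intervals
      (hint hstep (hsub (hpos (N + 1)) (hle N))) (hint (hle N) (hsub (hpos N) le_rfl))]
    linarith

theorem AntitoneOn.not_summable_dyadic_of_tendsto_integral {φ : ℝ → ℝ} {ρ : ℝ}
    (hφ : AntitoneOn φ (Ioc 0 ρ)) (hρ : 0 < ρ)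
    (hdiv : Tendsto (fun ε => ∫ t in ε..ρ, φ t) (𝓝[>] 0) atTop) :
    ¬Summable fun n : ℕ => 2⁻¹ ^ (n + 1) * ρ * φ (2⁻¹ ^ (n + 1) * ρ) := by
  intro hsum
  have hpoints : Tendsto (fun N : ℕ => (2⁻¹ : ℝ) ^ N * ρ) atTop (𝓝[>] 0) := by
    refine tendsto_nhdsWithin_of_tendsto_nhds_of_eventually_within _ ?_
      (Eventually.of_forall fun N => by simp only [mem_Ioi]; positivity)
    simpa only [zero_mul] using
      (tendsto_pow_atTop_nhds_zero_of_lt_one (by norm_num) (by norm_num)).mul_const ρ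
  exact not_tendsto_atTop_of_tendsto_nhds hsum.hasSum.tendsto_sum_nat
    (tendsto_atTop_mono (hφ.integral_dyadic_le_sum hρ) (hdiv.comp hpoints))

theorem stmt9_general (G g : ℝ → ℝ) (d₀ ρ₀ : ℝ) (hd₀' : d₀ < 1/2)
    (hG : ∀ t ∈ Set.Ioo (0:ℝ) (1/2), HasDerivAt G (g t) t)
    (hg : ∀ t ∈ Set.Ioo (0:ℝ) d₀, 1/(2*t) ≤ g t ∧ g t ≤ 1/t)
    (hρ₀ : 0 < ρ₀) (hρ₀' : ρ₀ ≤ d₀/2)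
    (hdiv : Filter.Tendsto (fun ε => ∫ t in ε..ρ₀, t * Real.exp (-2 * G t))
      (nhdsWithin 0 (Set.Ioi 0)) Filter.atTop) :
    (∑' n : ℕ, ENNReal.ofReal
        ((4:ℝ)⁻¹^(n+1) * Real.exp (-2 * G ((2:ℝ)⁻¹^(n+1) * ρ₀)))) = ⊤ := by
  have hanti : AntitoneOn (fun t => t * exp (-2 * G t)) (Ioc 0 ρ₀) :=
    (antitoneOn_mul_exp_neg_two_mul (fun t ht => hG t ⟨ht.1, ht.2.trans hd₀'⟩)
      (fun t ht => (hg t ht).1)).mono fun t ht => ⟨ht.1, by linarith [ht.2]⟩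
  have hterm : ∀ n : ℕ,
      2⁻¹ ^ (n + 1) * ρ₀ * (2⁻¹ ^ (n + 1) * ρ₀ * exp (-2 * G (2⁻¹ ^ (n + 1) * ρ₀))) =
        ρ₀ ^ 2 * ((4:ℝ)⁻¹ ^ (n + 1) * exp (-2 * G ((2:ℝ)⁻¹ ^ (n + 1) * ρ₀))) := fun n => by
    rw [show (4:ℝ)⁻¹ = 2⁻¹ * 2⁻¹ by norm_num, mul_pow]; ring
  have hns := hanti.not_summable_dyadic_of_tendsto_integral hρ₀ hdiv
  simp only [hterm, summable_mul_left_iff (pow_ne_zero 2 hρ₀.ne')] at hns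
  by_contra hS
  exact hns ((ENNReal.summable_toReal hS).congr fun n => ENNReal.toReal_ofReal (by positivity))

theorem stmt9 (G g : ℝ → ℝ) (d₀ ρ₀ : ℝ) (hd₀ : 0 < d₀) (hd₀' : d₀ < 1/2)
    (hG : ∀ t ∈ Set.Ioo (0:ℝ) (1/2), HasDerivAt G (g t) t)
    (hg : ∀ t ∈ Set.Ioo (0:ℝ) d₀, 1/(2*t) ≤ g t ∧ g t ≤ 1/t)
    (hρ₀ : 0 < ρ₀) (hρ₀' : ρ₀ ≤ d₀/2)
    (hdiv : Filter.Tendsto (fun ε => ∫ t in ε..ρ₀, t * Real.exp (-2 * G t))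
      (nhdsWithin 0 (Set.Ioi 0)) Filter.atTop) :
    (∑' n : ℕ, ENNReal.ofReal
        ((4:ℝ)⁻¹^(n+1) * Real.exp (-2 * G ((2:ℝ)⁻¹^(n+1) * ρ₀)))) = ⊤ :=
  stmt9_general G g d₀ ρ₀ hd₀' hG hg hρ₀ hρ₀' hdiv
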